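/- For real t, (1+t²) sinh(πt/2) / (2π t cosh(πt/2)) ≤ (4 + t²)/π², where at t = 0 the left side is extended continuously by the value lim_{t→0} (1+t²) tanh(πt/2)/(2πt) = 1/4. -/
import Mathlib


open Real

lemma my_sinh_nonneg {y : ℝ} (hy : 0 ≤ y) : 0 ≤ Real.sinh y := by
  rw [← Real.sinh_zero]
  exact Real.sinh_le_sinh.mpr hy

lemma sinh_le_mul_cosh {x : ℝ} (hx : 0 ≤ x) : Real.sinh x ≤ x * Real.cosh x := by
  have key : MonotoneOn (fun y : ℝ => y * Real.cosh y - Real.sinh y) (Set.Ici 0) := by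
    apply monotoneOn_of_deriv_nonneg (convex_Ici 0)
    · exact (continuous_id.mul Real.continuous_cosh).sub Real.continuous_sinh |>.continuousOn
    · intro y _
      exact ((differentiable_id.mul Real.differentiable_cosh).sub
        Real.differentiable_sinh).differentiableAt.differentiableWithinAt
    · intro y hy
      have hd : HasDerivAt (fun y : ℝ => y * Real.cosh y - Real.sinh y)
          ((1 * Real.cosh y + y * Real.sinh y) - Real.cosh y) y :=
        ((hasDerivAt_id y).mul (Real.hasDerivAt_cosh y)).sub (Real.hasDerivAt_sinh y)
      rw [hd.deriv]
      rw [interior_Ici, Set.mem_Ioi] at hy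
      have := my_sinh_nonneg hy.le
      nlinarith
  have h0 : (fun y : ℝ => y * Real.cosh y - Real.sinh y) 0 ≤
      (fun y : ℝ => y * Real.cosh y - Real.sinh y) x :=
    key (Set.self_mem_Ici) hx hx
  simp only [Real.cosh_zero, Real.sinh_zero, zero_mul, sub_zero] at h0
  linarith

lemma my_tanh_le {x : ℝ} (hx : 0 ≤ x) : Real.tanh x ≤ x := by
  rw [Real.tanh_eq_sinh_div_cosh, div_le_iff₀ (Real.cosh_pos _)]
  exact sinh_le_mul_cosh hx

lemma my_tanh_lt_one (x : ℝ) : Real.tanh x < 1 := by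
  rw [Real.tanh_eq_sinh_div_cosh, div_lt_one (Real.cosh_pos _)]
  nlinarith [Real.cosh_sub_sinh x, Real.exp_pos (-x)]

lemma aux_pos {s : ℝ} (hs : 0 < s) :
    (1 + s ^ 2) * Real.tanh (Real.pi * s / 2) / (2 * Real.pi * s)
      ≤ (4 + s ^ 2) / Real.pi ^ 2 := by
  have hπ := Real.pi_pos
  have hπ4 := Real.pi_lt_d2
  have hπ2 : Real.pi ^ 2 < 9.9225 := by nlinarith
  have harg : (0:ℝ) ≤ Real.pi * s / 2 := by positivity
  rw [div_le_div_iff₀ (by positivity) (by positivity)]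
  rcases le_total s 1 with h1 | h1
  · have ht : Real.tanh (Real.pi * s / 2) ≤ Real.pi * s / 2 := my_tanh_le harg
    have key : Real.pi ^ 2 * (1 + s ^ 2) ≤ 4 * (4 + s ^ 2) := by
      nlinarith [mul_nonneg (sub_nonneg.mpr h1) (by linarith : (0:ℝ) ≤ 1 + s), sq_nonneg s]
    nlinarith [mul_le_mul_of_nonneg_left ht (by positivity : (0:ℝ) ≤ (1 + s ^ 2) * Real.pi ^ 2),
      mul_le_mul_of_nonneg_left key (le_of_lt (mul_pos hπ hs))]
  · have ht : Real.tanh (Real.pi * s / 2) ≤ 1 := (my_tanh_lt_one _).le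
    have key : Real.pi * (1 + s ^ 2) ≤ 2 * s * (4 + s ^ 2) := by
      nlinarith [sq_nonneg (s - 1), mul_nonneg (mul_nonneg (sub_nonneg.mpr h1)
        (sub_nonneg.mpr h1)) (sub_nonneg.mpr h1),
        mul_lt_mul_of_pos_right hπ4 (show (0:ℝ) < 1 + s ^ 2 by positivity)]
    nlinarith [mul_le_mul_of_nonneg_left ht (by positivity : (0:ℝ) ≤ (1 + s ^ 2) * Real.pi ^ 2),
      mul_le_mul_of_nonneg_left key hπ.le]

theorem tanh_ratio_bound (t : ℝ) :
    (if t = 0 then (1 / 4 : ℝ)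
      else (1 + t ^ 2) * Real.tanh (Real.pi * t / 2) / (2 * Real.pi * t))
      ≤ (4 + t ^ 2) / Real.pi ^ 2 := by
  have hπ := Real.pi_pos
  have hπ4 := Real.pi_lt_d2
  rcases eq_or_ne t 0 with rfl | ht
  · rw [if_pos rfl, le_div_iff₀ (by positivity)]
    nlinarith
  · rw [if_neg ht]
    rcases lt_or_gt_of_ne ht with hneg | hpos
    · have h := aux_pos (s := -t) (by linarith)
      have e1 : Real.pi * -t / 2 = -(Real.pi * t / 2) := by ring
      rw [e1, Real.tanh_neg, neg_sq, mul_neg,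
        show (2 * Real.pi * -t) = -(2 * Real.pi * t) from by ring, neg_div_neg_eq] at h
      exact h
    · exact aux_pos hpos
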